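/- Let $n \ge 3$, $C>0$, $R>1$, $\varepsilon>0$, and let $\alpha:\mathbb{R}\to[0,1]$ be a smooth monotonically decreasing function with $\alpha \equiv 1$ on $(-\infty,-R+\varepsilon]$, $\alpha\equiv 0$ on $[-\varepsilon,\infty)$, satisfying $-\tfrac12\sqrt{C/(4(n-1)(n-2))} \le \alpha'(t) \le 0$ and $|\alpha''(t)| \le C/(8(n-1))$. Let $\lambda \ge \max\{R, 2\sqrt{4(n-1)(n-2)/C}\}$ and define $f(t) = \alpha(t)\frac{t+R}{\lambda} + (1-\alpha(t))$. Then for all $t > -R$ one has $0 < f(t) \le 1$, $(n-1)(n-2) f'(t)^2 \le C/4$, and $2(n-1) f(t) f''(t) \le C/4$. -/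

import Mathlib

set_option maxHeartbeats 1600000 in
/-- Estimates for the interpolating warping function
`f(t) = α(t)·(t+R)/λ + (1-α(t))` built from the cutoff `α`. -/
theorem stmt_1 (n : ℕ) (hn : 3 ≤ n) (C R ε : ℝ) (hC : 0 < C) (hR : 1 < R) (hε : 0 < ε)
    (α : ℝ → ℝ) (hα : ContDiff ℝ (⊤ : ℕ∞) α)
    (hrange : ∀ t, α t ∈ Set.Icc (0 : ℝ) 1)
    (hmono : Antitone α)
    (hone : ∀ t, t ≤ -R + ε → α t = 1)
    (hzero : ∀ t, -ε ≤ t → α t = 0)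
    (hd1 : ∀ t, -(1/2) * Real.sqrt (C / (4 * ((n : ℝ) - 1) * ((n : ℝ) - 2))) ≤ deriv α t ∧
      deriv α t ≤ 0)
    (hd2 : ∀ t, |deriv (deriv α) t| ≤ C / (8 * ((n : ℝ) - 1)))
    (lam : ℝ)
    (hlam : max R (2 * Real.sqrt (4 * ((n : ℝ) - 1) * ((n : ℝ) - 2) / C)) ≤ lam)
    (f : ℝ → ℝ) (hf : f = fun t => α t * ((t + R) / lam) + (1 - α t)) :
    ∀ t, -R < t →
      (0 < f t ∧ f t ≤ 1) ∧
      ((n : ℝ) - 1) * ((n : ℝ) - 2) * (deriv f t) ^ 2 ≤ C / 4 ∧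
      2 * ((n : ℝ) - 1) * f t * deriv (deriv f) t ≤ C / 4 := by
  have hn3 : (3:ℝ) ≤ (n:ℝ) := by exact_mod_cast hn
  have h1 : (2:ℝ) ≤ (n:ℝ) - 1 := by linarith
  have h2 : (1:ℝ) ≤ (n:ℝ) - 2 := by linarith
  have h1pos : (0:ℝ) < (n:ℝ) - 1 := by linarith
  have h2pos : (0:ℝ) < (n:ℝ) - 2 := by linarith
  have hne1 : ((n:ℝ) - 1) ≠ 0 := ne_of_gt h1pos
  have hne2 : ((n:ℝ) - 2) ≠ 0 := ne_of_gt h2pos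
  have hlamR : R ≤ lam := le_trans (le_max_left _ _) hlam
  have hlam0 : 0 < lam := by linarith
  obtain ⟨s, hs_def⟩ : ∃ s : ℝ, Real.sqrt (C / (4 * ((n:ℝ)-1) * ((n:ℝ)-2))) = s := ⟨_, rfl⟩
  rw [hs_def] at hd1
  have hspos : 0 < s := hs_def ▸ Real.sqrt_pos.mpr (by positivity)
  have hs2 : s ^ 2 = C / (4 * ((n:ℝ)-1) * ((n:ℝ)-2)) := by
    rw [← hs_def]; exact Real.sq_sqrt (by positivity)
  have hinv : Real.sqrt (4 * ((n:ℝ)-1) * ((n:ℝ)-2) / C) = s⁻¹ := by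
    rw [← hs_def, ← Real.sqrt_inv]
    congr 1
    field_simp
  have hlam_s : 2 * s⁻¹ ≤ lam := by
    rw [← hinv]; exact le_trans (le_max_right _ _) hlam
  have hlam_inv : 1 / lam ≤ s / 2 := by
    rw [div_le_div_iff₀ hlam0 two_pos]
    calc (1:ℝ) * 2 = s * (2 * s⁻¹) := by field_simp
    _ ≤ s * lam := by gcongr
  have hεR : -R + ε < -ε := by
    by_contra h
    push_neg at h
    have h1' := hone (-ε) h
    have h0' := hzero (-ε) le_rfl
    rw [h0'] at h1'
    norm_num at h1'
  -- derivatives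
  have hαd : Differentiable ℝ α := hα.differentiable (by simp)
  have hα' : ContDiff ℝ ((⊤ : ℕ∞) : WithTop ℕ∞) (deriv α) := (contDiff_infty_iff_deriv.mp (hα.of_le (by simp))).2
  have hα'd : Differentiable ℝ (deriv α) :=
    hα'.differentiable (by simp)
  have hasd : ∀ t, HasDerivAt f (deriv α t * ((t + R) / lam - 1) + α t / lam) t := by
    intro t
    rw [hf]
    have hx : HasDerivAt (fun t : ℝ => (t + R) / lam) (1 / lam) t :=
      ((hasDerivAt_id t).add_const R).div_const lam
    have h2' := (hαd t).hasDerivAt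
    have := (h2'.mul hx).add ((hasDerivAt_const t (1:ℝ)).sub h2')
    exact this.congr_deriv (by ring)
  have hf' : deriv f = fun t => deriv α t * ((t + R) / lam - 1) + α t / lam :=
    funext fun t => (hasd t).deriv
  have hasd2 : ∀ t, HasDerivAt (deriv f)
      (deriv (deriv α) t * ((t + R) / lam - 1) + 2 * deriv α t / lam) t := by
    intro t
    rw [hf']
    have hx : HasDerivAt (fun t : ℝ => (t + R) / lam - 1) (1 / lam) t :=
      (((hasDerivAt_id t).add_const R).div_const lam).sub_const 1
    have h2' := (hα'd t).hasDerivAt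
    have h3' := (hαd t).hasDerivAt
    have := (h2'.mul hx).add (h3'.div_const lam)
    exact this.congr_deriv (by ring)
  have hf'' : ∀ t, deriv (deriv f) t =
      deriv (deriv α) t * ((t + R) / lam - 1) + 2 * deriv α t / lam :=
    fun t => (hasd2 t).deriv
  have hzero' : ∀ t, -ε < t → deriv α t = 0 := by
    intro t ht
    have heq : α =ᶠ[nhds t] fun _ => (0:ℝ) := by
      filter_upwards [Ioi_mem_nhds ht] with x hx
      exact hzero x (le_of_lt hx)
    rw [heq.deriv_eq]
    simp
  have hdf0 : ∀ t, -ε < t → deriv f t = 0 := by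
    intro t ht
    rw [hf']
    simp [hzero' t ht, hzero t ht.le]
  have hddf0 : ∀ t, -ε < t → deriv (deriv f) t = 0 := by
    intro t ht
    have heq : deriv f =ᶠ[nhds t] fun _ => (0:ℝ) := by
      filter_upwards [Ioi_mem_nhds ht] with x hx
      exact hdf0 x hx
    rw [heq.deriv_eq]
    simp
  intro t ht
  have ha := hrange t
  have ha0 : 0 ≤ α t := ha.1
  have ha1 : α t ≤ 1 := ha.2
  have hx : 0 < (t + R) / lam := div_pos (by linarith) hlam0
  -- positivity and upper bound for f
  have hf_pos : 0 < f t := by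
    rw [hf]
    dsimp only
    rcases le_or_gt ((t + R) / lam) 1 with hx1 | hx1
    · nlinarith [mul_nonneg (sub_nonneg.mpr ha1) (sub_nonneg.mpr hx1)]
    · nlinarith [mul_le_mul_of_nonneg_left hx1.le ha0]
  have hf_le : f t ≤ 1 := by
    rcases le_or_gt ((t + R) / lam) 1 with hx1 | hx1
    · rw [hf]
      dsimp only
      nlinarith [mul_nonneg ha0 (sub_nonneg.mpr hx1)]
    · have hαt : α t = 0 := hzero t (by
        have : lam < t + R := (one_lt_div hlam0).mp hx1
        linarith)
      rw [hf]
      simp [hαt]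
  refine ⟨⟨hf_pos, hf_le⟩, ?_, ?_⟩
  · -- first derivative estimate
    rcases le_or_gt t (-ε) with hcase | hcase
    · have hfacle : (t + R) / lam ≤ 1 := by
        rw [div_le_one hlam0]; linarith
      have hα'le : deriv α t ≤ 0 := (hd1 t).2
      have hα'ge : -(s / 2) ≤ deriv α t := by
        have := (hd1 t).1
        linarith
      have hfac1 : -1 ≤ (t + R) / lam - 1 := by nlinarith
      have hprod_nonneg : 0 ≤ deriv α t * ((t + R) / lam - 1) := by
        calc (0:ℝ) ≤ (-deriv α t) * (-((t + R) / lam - 1)) :=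
              mul_nonneg (by linarith) (by linarith)
        _ = deriv α t * ((t + R) / lam - 1) := by ring
      have hprod_le : deriv α t * ((t + R) / lam - 1) ≤ s / 2 := by
        calc deriv α t * ((t + R) / lam - 1)
            = (-deriv α t) * (-((t + R) / lam - 1)) := by ring
        _ ≤ (s / 2) * 1 :=
              mul_le_mul (by linarith) (by linarith) (by linarith) (by linarith)
        _ = s / 2 := mul_one _
      have hquot0 : 0 ≤ α t / lam := div_nonneg ha0 hlam0.le
      have hquot : α t / lam ≤ s / 2 := by
        have h' : α t / lam ≤ 1 / lam := by gcongr
        linarith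
      have hub : deriv f t ≤ s := by
        rw [hf']
        dsimp only
        linarith
      have hlb : 0 ≤ deriv f t := by
        rw [hf']
        dsimp only
        linarith
      have hsq : (deriv f t) ^ 2 ≤ s ^ 2 := pow_le_pow_left₀ hlb hub 2
      rw [hs2] at hsq
      have key : ((n:ℝ)-1) * ((n:ℝ)-2) * (C / (4 * ((n:ℝ)-1) * ((n:ℝ)-2))) = C / 4 := by
        field_simp
      have := mul_le_mul_of_nonneg_left hsq
        (by positivity : (0:ℝ) ≤ ((n:ℝ)-1) * ((n:ℝ)-2))
      rw [mul_assoc] at *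
      linarith [key]
    · rw [hdf0 t hcase]
      norm_num
      positivity
  · -- second derivative estimate
    rcases le_or_gt t (-ε) with hcase | hcase
    · have hfacle : (t + R) / lam ≤ 1 := by
        rw [div_le_one hlam0]; linarith
      have hfac1 : -1 ≤ (t + R) / lam - 1 := by nlinarith
      have hα'le : deriv α t ≤ 0 := (hd1 t).2
      have hB := hd2 t
      have habs : |deriv (deriv α) t * ((t + R) / lam - 1)| ≤ C / (8 * ((n:ℝ)-1)) := by
        rw [abs_mul]
        calc |deriv (deriv α) t| * |(t + R) / lam - 1| ≤ (C / (8 * ((n:ℝ)-1))) * 1 := by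
              apply mul_le_mul hB _ (abs_nonneg _) (le_trans (abs_nonneg _) hB)
              rw [abs_le]
              constructor <;> linarith
        _ = C / (8 * ((n:ℝ)-1)) := mul_one _
      have hddf_le : deriv (deriv f) t ≤ C / (8 * ((n:ℝ)-1)) := by
        rw [hf'' t]
        have h2α : 2 * deriv α t / lam ≤ 0 :=
          div_nonpos_of_nonpos_of_nonneg (by linarith) hlam0.le
        have := le_trans (le_abs_self _) habs
        linarith
      rcases le_or_gt (deriv (deriv f) t) 0 with hdd | hdd
      · have : 2 * ((n:ℝ)-1) * f t * deriv (deriv f) t ≤ 0 :=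
          mul_nonpos_of_nonneg_of_nonpos (by positivity) hdd
        have hC4 : (0:ℝ) ≤ C / 4 := by positivity
        linarith
      · have hff : f t * deriv (deriv f) t ≤ deriv (deriv f) t :=
          mul_le_of_le_one_left hdd.le hf_le
        have key : 2 * ((n:ℝ)-1) * (C / (8 * ((n:ℝ)-1))) = C / 4 := by
          field_simp
          ring
        calc 2 * ((n:ℝ)-1) * f t * deriv (deriv f) t
            = 2 * ((n:ℝ)-1) * (f t * deriv (deriv f) t) := by ring
          _ ≤ 2 * ((n:ℝ)-1) * (C / (8 * ((n:ℝ)-1))) := by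
              apply mul_le_mul_of_nonneg_left _ (by positivity)
              exact le_trans hff hddf_le
          _ = C / 4 := key
    · rw [hddf0 t hcase]
      norm_num
      positivity
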